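/- If q ∈ ℝ² satisfies the tightened constraint A q ≤ b − 𝟙(d_safe − ε) with rows of A of unit norm and 0 ≤ ε ≤ d_safe, then the distance from q to the complement of the polytope {p : A p ≤ b} is at least d_safe − ε. -/
import Mathlib


open scoped RealInnerProductSpace

theorem tightened_constraint_safety_margin {K : ℕ}
    (a : Fin K → EuclideanSpace ℝ (Fin 2)) (b : Fin K → ℝ)
    (ha : ∀ j, ‖a j‖ = 1)
    (dsafe ε : ℝ) (hε0 : 0 ≤ ε) (hεd : ε ≤ dsafe)
    (q : EuclideanSpace ℝ (Fin 2))
    (hq : ∀ j, ⟪a j, q⟫ ≤ b j - (dsafe - ε)) :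
    ∀ p : EuclideanSpace ℝ (Fin 2),
      p ∉ {p : EuclideanSpace ℝ (Fin 2) | ∀ j, ⟪a j, p⟫ ≤ b j} →
      dsafe - ε ≤ dist q p := by
  intro p hp
  simp only [Set.mem_setOf_eq, not_forall, not_le] at hp
  obtain ⟨j, hj⟩ := hp
  have h1 : dsafe - ε < ⟪a j, p - q⟫ := by
    rw [inner_sub_right]
    have := hq j
    linarith
  have h2 : ⟪a j, p - q⟫ ≤ ‖a j‖ * ‖p - q‖ := real_inner_le_norm _ _
  rw [ha j, one_mul] at h2
  rw [dist_comm, dist_eq_norm]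
  linarith
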